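/- arXiv:1006.5652 — 2 statements merged into one kernel-verified Lean document; each statement's English description precedes it below -/
import Mathlib

section
/- For 0 < q < 1 and every complex number z with |z| < 1/(1-q), one has e_q(z) · E_q(-z) = 1, i.e. (∑_{n=0}^∞ z^n/[n]_q!) · (∑_{n=0}^∞ q^{n(n-1)/2} (-z)^n/[n]_q!) = 1. -/
/-- The q-integer `[k]_q = 1 + q + q^2 + ⋯ + q^(k-1)`. -/
noncomputable def qInt (q : ℝ) (k : ℕ) : ℝ := ∑ i ∈ Finset.range k, q ^ i

/-- The q-factorial `[n]_q! = [1]_q [2]_q ⋯ [n]_q`, with `[0]_q! = 1`. -/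
noncomputable def qFact (q : ℝ) (n : ℕ) : ℝ := ∏ k ∈ Finset.range n, qInt q (k + 1)

/-!
The Cauchy product of the two series has `n`-th coefficient
`c n = ∑_{a+b=n} z^a/[a]! · q^{b(b-1)/2} (-z)^b/[b]!`.
Splitting `[n+1] = [a] + q^a [b]` over the antidiagonal `a + b = n + 1` and using
`[k+1] e_{k+1} = z e_k`, `[k+1] E_{k+1} = -q^k z E_k` for the terms of the two series gives
`[n+1] c (n+1) = (1 - q^n) z c n`. Since `c 0 = 1` and `1 - q^0 = 0`, every later coefficient
vanishes. Both series converge absolutely for `|z| < 1/(1-q)` by the ratio test, as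
`[n]_q → 1/(1-q)`, and the terms of `E_q(-z)` are dominated by those of `e_q(z)`.
-/

open Finset Filter Topology

lemma qInt_zero (q : ℝ) : qInt q 0 = 0 := by simp [qInt]

lemma qInt_add (q : ℝ) (a b : ℕ) : qInt q (a + b) = qInt q a + q ^ a * qInt q b := by
  simp only [qInt, sum_range_add, mul_sum, pow_add]

lemma one_le_qInt_succ {q : ℝ} (hq : 0 ≤ q) (k : ℕ) : 1 ≤ qInt q (k + 1) := by
  rw [qInt, sum_range_succ', pow_zero, le_add_iff_nonneg_left]
  positivity

lemma tendsto_qInt {q : ℝ} (hq0 : 0 ≤ q) (hq1 : q < 1) :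
    Tendsto (qInt q) atTop (𝓝 (1 - q)⁻¹) :=
  (hasSum_geometric_of_lt_one hq0 hq1).tendsto_sum_nat

lemma qFact_zero (q : ℝ) : qFact q 0 = 1 := prod_range_zero _

lemma qFact_succ (q : ℝ) (n : ℕ) : qFact q (n + 1) = qFact q n * qInt q (n + 1) :=
  prod_range_succ _ n

lemma qFact_pos {q : ℝ} (hq : 0 ≤ q) (n : ℕ) : 0 < qFact q n :=
  prod_pos fun k _ => one_pos.trans_le (one_le_qInt_succ hq k)

lemma triangle_succ (n : ℕ) : (n + 1) * (n + 1 - 1) / 2 = n * (n - 1) / 2 + n := by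
  rw [← Nat.choose_two_right, ← Nat.choose_two_right, Nat.choose_succ_succ,
    Nat.choose_one_right, add_comm]

noncomputable def qeTerm (q : ℝ) (z : ℂ) (n : ℕ) : ℂ := z ^ n / (qFact q n : ℂ)

noncomputable def qETerm (q : ℝ) (z : ℂ) (n : ℕ) : ℂ :=
  (q : ℂ) ^ (n * (n - 1) / 2) * (-z) ^ n / (qFact q n : ℂ)

lemma qInt_succ_mul_qeTerm_succ {q : ℝ} (hq : 0 ≤ q) (z : ℂ) (n : ℕ) :
    (qInt q (n + 1) : ℂ) * qeTerm q z (n + 1) = z * qeTerm q z n := by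
  have hF : (qFact q n : ℂ) ≠ 0 := mod_cast (qFact_pos hq n).ne'
  have hI : (qInt q (n + 1) : ℂ) ≠ 0 := mod_cast (one_pos.trans_le (one_le_qInt_succ hq n)).ne'
  simp only [qeTerm, qFact_succ, Complex.ofReal_mul]
  field_simp
  ring

lemma qInt_succ_mul_qETerm_succ {q : ℝ} (hq : 0 ≤ q) (z : ℂ) (n : ℕ) :
    (qInt q (n + 1) : ℂ) * qETerm q z (n + 1) = -(q ^ n * z) * qETerm q z n := by
  have hF : (qFact q n : ℂ) ≠ 0 := mod_cast (qFact_pos hq n).ne'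
  have hI : (qInt q (n + 1) : ℂ) ≠ 0 := mod_cast (one_pos.trans_le (one_le_qInt_succ hq n)).ne'
  simp only [qETerm, qFact_succ, Complex.ofReal_mul, triangle_succ]
  field_simp
  ring

lemma norm_qETerm_le {q : ℝ} (hq0 : 0 ≤ q) (hq1 : q ≤ 1) (z : ℂ) (n : ℕ) :
    ‖qETerm q z n‖ ≤ ‖qeTerm q z n‖ := by
  rw [qETerm, qeTerm, mul_div_assoc, norm_mul, norm_div, norm_div, norm_pow, norm_pow, norm_pow,
    Complex.norm_real, Real.norm_of_nonneg hq0, norm_neg]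
  exact mul_le_of_le_one_left (by positivity) (pow_le_one₀ hq0 hq1)

noncomputable def qCauchyCoeff (q : ℝ) (z : ℂ) (n : ℕ) : ℂ :=
  ∑ p ∈ antidiagonal n, qeTerm q z p.1 * qETerm q z p.2

lemma qInt_succ_mul_qCauchyCoeff_succ {q : ℝ} (hq : 0 ≤ q) (z : ℂ) (n : ℕ) :
    (qInt q (n + 1) : ℂ) * qCauchyCoeff q z (n + 1) = (1 - q ^ n) * z * qCauchyCoeff q z n := by
  have hsplit : ∀ p ∈ antidiagonal (n + 1),
      (qInt q (n + 1) : ℂ) * (qeTerm q z p.1 * qETerm q z p.2) =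
        (qInt q p.1 : ℂ) * qeTerm q z p.1 * qETerm q z p.2 +
          q ^ p.1 * qeTerm q z p.1 * ((qInt q p.2 : ℂ) * qETerm q z p.2) := by
    intro p hp
    rw [← mem_antidiagonal.mp hp, qInt_add]
    push_cast
    ring
  rw [qCauchyCoeff, mul_sum, sum_congr rfl hsplit, sum_add_distrib,
    Nat.sum_antidiagonal_succ, Nat.sum_antidiagonal_succ', qCauchyCoeff, mul_sum]
  simp only [qInt_zero, Complex.ofReal_zero, zero_mul, mul_zero, zero_add,
    qInt_succ_mul_qeTerm_succ hq, qInt_succ_mul_qETerm_succ hq, ← sum_add_distrib]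
  refine sum_congr rfl fun p hp => ?_
  rw [← mem_antidiagonal.mp hp]
  ring

lemma qCauchyCoeff_zero (q : ℝ) (z : ℂ) : qCauchyCoeff q z 0 = 1 := by
  simp [qCauchyCoeff, qeTerm, qETerm, qFact_zero]

lemma qCauchyCoeff_succ {q : ℝ} (hq : 0 ≤ q) (z : ℂ) (n : ℕ) :
    qCauchyCoeff q z (n + 1) = 0 := by
  have hI : (qInt q (n + 1) : ℂ) ≠ 0 := mod_cast (one_pos.trans_le (one_le_qInt_succ hq n)).ne'
  refine (mul_eq_zero.mp ?_).resolve_left hI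
  rw [qInt_succ_mul_qCauchyCoeff_succ hq]
  cases n with
  | zero => simp
  | succ n => rw [qCauchyCoeff_succ hq z n, mul_zero]

lemma summable_norm_qeTerm {q : ℝ} (hq0 : 0 ≤ q) (hq1 : q < 1) {z : ℂ}
    (hz : ‖z‖ < 1 / (1 - q)) :
    Summable fun n => ‖qeTerm q z n‖ := by
  have hratio : Tendsto (fun n => ‖z‖ / qInt q (n + 1)) atTop (𝓝 (‖z‖ * (1 - q))) := by
    have h := (tendsto_const_nhds (x := ‖z‖)).div
      ((tendsto_qInt hq0 hq1).comp (tendsto_add_atTop_nat 1)) (inv_ne_zero (sub_pos.mpr hq1).ne')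
    rwa [div_inv_eq_mul] at h
  have hlt : ‖z‖ * (1 - q) < 1 := by
    rwa [lt_div_iff₀ (sub_pos.mpr hq1)] at hz
  obtain ⟨r, hzr, hr1⟩ := exists_between hlt
  refine summable_of_ratio_norm_eventually_le hr1 ?_
  filter_upwards [hratio.eventually (gt_mem_nhds hzr)] with n hn
  have hI := one_pos.trans_le (one_le_qInt_succ hq0 n)
  have hnorm : qInt q (n + 1) * ‖qeTerm q z (n + 1)‖ = ‖z‖ * ‖qeTerm q z n‖ := by
    have h := congrArg norm (qInt_succ_mul_qeTerm_succ hq0 z n)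
    rwa [norm_mul, norm_mul, Complex.norm_real, Real.norm_of_nonneg hI.le] at h
  simp only [norm_norm]
  calc ‖qeTerm q z (n + 1)‖ = ‖z‖ / qInt q (n + 1) * ‖qeTerm q z n‖ := by
        rw [div_mul_eq_mul_div, eq_div_iff hI.ne', mul_comm, hnorm]
    _ ≤ r * ‖qeTerm q z n‖ := by gcongr

/-- For `0 < q < 1` and `|z| < 1/(1-q)`, one has `e_q(z) · E_q(-z) = 1`. -/
theorem eq_mul_Eq_neg_eq_one (q : ℝ) (hq0 : 0 < q) (hq1 : q < 1) (z : ℂ)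
    (hz : ‖z‖ < 1 / (1 - q)) :
    (∑' n : ℕ, z ^ n / (qFact q n : ℂ)) *
      (∑' n : ℕ, (q : ℂ) ^ (n * (n - 1) / 2) * (-z) ^ n / (qFact q n : ℂ)) = 1 := by
  have he := summable_norm_qeTerm hq0.le hq1 hz
  have hE : Summable fun n => ‖qETerm q z n‖ :=
    he.of_nonneg_of_le (fun _ => norm_nonneg _) (norm_qETerm_le hq0.le hq1.le z)
  change (∑' n, qeTerm q z n) * (∑' n, qETerm q z n) = 1
  rw [tsum_mul_tsum_eq_tsum_sum_antidiagonal_of_summable_norm he hE]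
  change ∑' n, qCauchyCoeff q z n = 1
  rw [tsum_eq_single 0 fun n hn => ?_, qCauchyCoeff_zero]
  obtain ⟨m, rfl⟩ := Nat.exists_eq_succ_of_ne_zero hn
  exact qCauchyCoeff_succ hq0.le z m
end

section
/- Let q > 0, q ≠ 1, and let R_q = 2/(1-q) if 0 < q < 1 and R_q = 2q/(q-1) if q > 1. Then for every real number x with |x| < R_q, the complex number 𝓔_q(ix) = ∑_{n=0}^∞ (ix)^n/{n}_q! has modulus 1, i.e. |𝓔_q(ix)| = 1. -/
/-!
The coefficients `aₙ = 1/{n}_q!` satisfy `(1 - q^(n+1)) a_(n+1) = (1 - q)/2 · (1 + q^n) aₙ`.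
Feeding this into the Cauchy coefficients `Sₙ = ∑_{i+j=n} (-1)^j a_i a_j` of `𝓔_q(z) 𝓔_q(-z)`
gives `(1 - q^(n+1)) S_(n+1) = (1 - q)/2 · (1 - q^n) Sₙ`, so `Sₙ = 0` for `n ≥ 1` and
`𝓔_q(z) 𝓔_q(-z) = 1` on the disc of convergence. The coefficients are real, so
`conj 𝓔_q(ix) = 𝓔_q(-ix)` and `|𝓔_q(ix)|² = 1`.
-/

/-- The symbol `{n}_q = 2(1-q^n)/((1-q)(1+q^(n-1)))` (for `n ≥ 1`). -/
noncomputable def qBrace (q : ℝ) (n : ℕ) : ℝ :=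
  2 * (1 - q ^ n) / ((1 - q) * (1 + q ^ (n - 1)))

/-- The factorial `{n}_q! = {1}_q {2}_q ⋯ {n}_q`, with `{0}_q! = 1`. -/
noncomputable def qBraceFact (q : ℝ) (n : ℕ) : ℝ := ∏ k ∈ Finset.range n, qBrace q (k + 1)

/-- The radius `R_q = 2/(1-q)` for `0 < q < 1` and `R_q = 2q/(q-1)` for `q > 1`. -/
noncomputable def Rq (q : ℝ) : ℝ := if q < 1 then 2 / (1 - q) else 2 * q / (q - 1)

/-- The improved q-exponential function `𝓔_q(z) = ∑_{n=0}^∞ z^n/{n}_q!`. -/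
noncomputable def impExp (q : ℝ) (z : ℂ) : ℂ := ∑' n : ℕ, z ^ n / (qBraceFact q n : ℂ)

open Finset Filter Topology ComplexConjugate

section QDifferenceRecurrence

variable {K : Type*} [Field K] {q c : K} {a : ℕ → K}

theorem one_sub_pow_mul_sum_antidiagonal_succ
    (ha : ∀ m, (1 - q ^ (m + 1)) * a (m + 1) = c * (1 + q ^ m) * a m) (n : ℕ) :
    (1 - q ^ (n + 1)) * ∑ p ∈ antidiagonal (n + 1), (-1) ^ p.2 * a p.1 * a p.2 =
      c * (1 - q ^ n) * ∑ p ∈ antidiagonal n, (-1) ^ p.2 * a p.1 * a p.2 := by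
  have shift_left : ∑ p ∈ antidiagonal (n + 1), (-1) ^ p.2 * (1 - q ^ p.1) * a p.1 * a p.2 =
      c * ∑ p ∈ antidiagonal n, (-1) ^ p.2 * (1 + q ^ p.1) * a p.1 * a p.2 := by
    rw [Nat.sum_antidiagonal_succ, mul_sum]
    simp only [pow_zero, sub_self, mul_zero, zero_mul, zero_add]
    refine sum_congr rfl fun p _ => ?_
    linear_combination (-1) ^ p.2 * a p.2 * ha p.1
  have shift_right :
      ∑ p ∈ antidiagonal (n + 1), (-1) ^ p.2 * q ^ p.1 * (1 - q ^ p.2) * a p.1 * a p.2 =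
        -c * ∑ p ∈ antidiagonal n, (-1) ^ p.2 * q ^ p.1 * (1 + q ^ p.2) * a p.1 * a p.2 := by
    rw [Nat.sum_antidiagonal_succ', mul_sum]
    simp only [pow_zero, sub_self, mul_zero, zero_mul, zero_add]
    refine sum_congr rfl fun p _ => ?_
    linear_combination -(-1) ^ p.2 * q ^ p.1 * a p.1 * ha p.2
  -- on the antidiagonal `1 - q^m = (1 - q^i) + q^i (1 - q^j) = (1 + q^i) - q^i (1 + q^j)`
  have split_sub (m : ℕ) : (1 - q ^ m) * ∑ p ∈ antidiagonal m, (-1) ^ p.2 * a p.1 * a p.2 =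
      ∑ p ∈ antidiagonal m, (-1) ^ p.2 * (1 - q ^ p.1) * a p.1 * a p.2 +
        ∑ p ∈ antidiagonal m, (-1) ^ p.2 * q ^ p.1 * (1 - q ^ p.2) * a p.1 * a p.2 := by
    rw [mul_sum, ← sum_add_distrib]
    refine sum_congr rfl fun p hp => ?_
    rw [← mem_antidiagonal.1 hp, pow_add]
    ring
  have split_add (m : ℕ) : (1 - q ^ m) * ∑ p ∈ antidiagonal m, (-1) ^ p.2 * a p.1 * a p.2 =
      ∑ p ∈ antidiagonal m, (-1) ^ p.2 * (1 + q ^ p.1) * a p.1 * a p.2 -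
        ∑ p ∈ antidiagonal m, (-1) ^ p.2 * q ^ p.1 * (1 + q ^ p.2) * a p.1 * a p.2 := by
    rw [mul_sum, ← sum_sub_distrib]
    refine sum_congr rfl fun p hp => ?_
    rw [← mem_antidiagonal.1 hp, pow_add]
    ring
  rw [split_sub, shift_left, shift_right, mul_assoc, split_add]
  ring

theorem sum_antidiagonal_succ_neg_one_pow_mul_eq_zero (hq : ∀ m, q ^ (m + 1) ≠ 1)
    (ha : ∀ m, (1 - q ^ (m + 1)) * a (m + 1) = c * (1 + q ^ m) * a m) (n : ℕ) :
    ∑ p ∈ antidiagonal (n + 1), (-1) ^ p.2 * a p.1 * a p.2 = 0 := by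
  have one_sub_ne_zero (m : ℕ) : 1 - q ^ (m + 1) ≠ 0 := sub_ne_zero.2 (hq m).symm
  induction n with
  | zero =>
    have h := one_sub_pow_mul_sum_antidiagonal_succ ha 0
    rw [pow_zero, sub_self, mul_zero, zero_mul] at h
    exact (mul_eq_zero.1 h).resolve_left (one_sub_ne_zero 0)
  | succ n ih =>
    have h := one_sub_pow_mul_sum_antidiagonal_succ ha (n + 1)
    rw [ih, mul_zero] at h
    exact (mul_eq_zero.1 h).resolve_left (one_sub_ne_zero (n + 1))

end QDifferenceRecurrence

section QBrace

variable {q : ℝ}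

theorem qBrace_succ (q : ℝ) (n : ℕ) :
    qBrace q (n + 1) = 2 * (1 - q ^ (n + 1)) / ((1 - q) * (1 + q ^ n)) := by
  simp [qBrace]

theorem qBrace_succ_eq_geom_sum (hq1 : q ≠ 1) (n : ℕ) :
    qBrace q (n + 1) = 2 * (∑ i ∈ range (n + 1), q ^ i) / (1 + q ^ n) := by
  have : 1 - q ≠ 0 := sub_ne_zero.2 hq1.symm
  rw [qBrace_succ, geom_sum_eq hq1]
  field_simp
  ring

theorem qBrace_succ_pos (hq : 0 < q) (hq1 : q ≠ 1) (n : ℕ) : 0 < qBrace q (n + 1) := by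
  rw [qBrace_succ_eq_geom_sum hq1]
  positivity

theorem pow_succ_ne_one (hq : 0 ≤ q) (hq1 : q ≠ 1) (n : ℕ) : q ^ (n + 1) ≠ 1 :=
  (pow_eq_one_iff_of_nonneg hq n.succ_ne_zero).not.2 hq1

theorem qBraceFact_pos (hq : 0 < q) (hq1 : q ≠ 1) (n : ℕ) : 0 < qBraceFact q n :=
  prod_pos fun k _ => qBrace_succ_pos hq hq1 k

theorem qBraceFact_succ (q : ℝ) (n : ℕ) :
    qBraceFact q (n + 1) = qBraceFact q n * qBrace q (n + 1) :=
  prod_range_succ _ _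

theorem one_sub_pow_succ_mul_inv_qBraceFact_succ (hq : 0 < q) (hq1 : q ≠ 1) (n : ℕ) :
    (1 - q ^ (n + 1)) * (qBraceFact q (n + 1))⁻¹ =
      (1 - q) / 2 * (1 + q ^ n) * (qBraceFact q n)⁻¹ := by
  have := (qBraceFact_pos hq hq1 n).ne'
  have : 1 - q ≠ 0 := sub_ne_zero.2 hq1.symm
  have : 1 - q ^ (n + 1) ≠ 0 := sub_ne_zero.2 (pow_succ_ne_one hq.le hq1 n).symm
  rw [qBraceFact_succ, qBrace_succ]
  field_simp

theorem qBrace_inv_succ (hq : 0 < q) (hq1 : q ≠ 1) (n : ℕ) :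
    qBrace q⁻¹ (n + 1) = qBrace q (n + 1) := by
  have : 1 - q ≠ 0 := sub_ne_zero.2 hq1.symm
  have := hq.ne'
  rw [qBrace_succ, qBrace_succ, inv_pow, inv_pow]
  field_simp
  ring

theorem tendsto_qBrace_succ_of_lt_one (hq : 0 ≤ q) (h : q < 1) :
    Tendsto (fun n => qBrace q (n + 1)) atTop (𝓝 (2 / (1 - q))) := by
  have hc : ContinuousAt (fun t : ℝ => 2 * (1 - q * t) / ((1 - q) * (1 + t))) 0 := by
    have : 1 - q ≠ 0 := by linarith
    fun_prop (disch := simpa)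
  have := hc.tendsto.comp (tendsto_pow_atTop_nhds_zero_of_lt_one hq h)
  simpa [Function.comp_def, qBrace_succ, pow_succ'] using this

theorem tendsto_qBrace_succ (hq : 0 < q) (hq1 : q ≠ 1) :
    Tendsto (fun n => qBrace q (n + 1)) atTop (𝓝 (Rq q)) := by
  rcases hq1.lt_or_gt with h | h
  · rw [Rq, if_pos h]
    exact tendsto_qBrace_succ_of_lt_one hq.le h
  · have := tendsto_qBrace_succ_of_lt_one (inv_pos.2 hq).le (inv_lt_one_of_one_lt₀ h)
    simp only [qBrace_inv_succ hq hq1] at this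
    convert this using 2
    rw [Rq, if_neg h.not_gt]
    field_simp

end QBrace

section ImpExp

variable {q : ℝ}

theorem summable_norm_impExp_term (hq : 0 < q) (hq1 : q ≠ 1) {z : ℂ} (hz : ‖z‖ < Rq q) :
    Summable fun n => ‖z ^ n / (qBraceFact q n : ℂ)‖ := by
  have hnorm (n : ℕ) : ‖z ^ n / (qBraceFact q n : ℂ)‖ = ‖z‖ ^ n / qBraceFact q n := by
    rw [norm_div, norm_pow, Complex.norm_real, Real.norm_of_nonneg (qBraceFact_pos hq hq1 n).le]
  obtain ⟨r, hzr, hrR⟩ := exists_between hz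
  have hr : 0 < r := (norm_nonneg z).trans_lt hzr
  have hterm (k : ℕ) : 0 ≤ ‖z‖ ^ k / qBraceFact q k := by
    have := qBraceFact_pos hq hq1 k
    positivity
  simp only [hnorm]
  refine summable_of_ratio_norm_eventually_le ((div_lt_one hr).2 hzr) ?_
  filter_upwards [(tendsto_qBrace_succ hq hq1).eventually_const_lt hrR] with n hn
  rw [Real.norm_of_nonneg (hterm n), Real.norm_of_nonneg (hterm _), qBraceFact_succ, pow_succ,
    mul_div_mul_comm, mul_comm]
  exact mul_le_mul_of_nonneg_right (div_le_div_of_nonneg_left (norm_nonneg z) hr hn.le) (hterm n)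

theorem impExp_mul_impExp_neg (hq : 0 < q) (hq1 : q ≠ 1) {z : ℂ} (hz : ‖z‖ < Rq q) :
    impExp q z * impExp q (-z) = 1 := by
  have hcoeff (m : ℕ) :
      (1 - (q : ℂ) ^ (m + 1)) * (qBraceFact q (m + 1) : ℂ)⁻¹ =
        (1 - q) / 2 * (1 + (q : ℂ) ^ m) * (qBraceFact q m : ℂ)⁻¹ := by
    exact_mod_cast one_sub_pow_succ_mul_inv_qBraceFact_succ hq hq1 m
  have hq' (m : ℕ) : (q : ℂ) ^ (m + 1) ≠ 1 := by exact_mod_cast pow_succ_ne_one hq.le hq1 m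
  rw [impExp, impExp, tsum_mul_tsum_eq_tsum_sum_antidiagonal_of_summable_norm
    (summable_norm_impExp_term hq hq1 hz)
    (summable_norm_impExp_term hq hq1 (by rwa [norm_neg]))]
  rw [tsum_eq_single 0 fun n hn => ?_]
  · simp [qBraceFact]
  obtain ⟨m, rfl⟩ := Nat.exists_eq_succ_of_ne_zero hn
  calc ∑ p ∈ antidiagonal (m + 1),
        z ^ p.1 / (qBraceFact q p.1 : ℂ) * ((-z) ^ p.2 / (qBraceFact q p.2 : ℂ))
      = z ^ (m + 1) * ∑ p ∈ antidiagonal (m + 1),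
          (-1) ^ p.2 * (qBraceFact q p.1 : ℂ)⁻¹ * (qBraceFact q p.2 : ℂ)⁻¹ := by
        rw [mul_sum]
        refine sum_congr rfl fun p hp => ?_
        rw [← mem_antidiagonal.1 hp, neg_pow, pow_add]
        ring
    _ = 0 := by
        rw [sum_antidiagonal_succ_neg_one_pow_mul_eq_zero (a := fun k => (qBraceFact q k : ℂ)⁻¹)
          hq' hcoeff, mul_zero]

theorem conj_impExp (q : ℝ) (z : ℂ) : conj (impExp q z) = impExp q (conj z) := by
  simp only [impExp, Complex.conj_tsum, map_div₀, map_pow, Complex.conj_ofReal]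

end ImpExp

/-- For real `x` with `|x| < R_q`, `|𝓔_q(ix)| = 1`. -/
theorem abs_impExp_I_mul (q : ℝ) (hq : 0 < q) (hq1 : q ≠ 1) (x : ℝ)
    (hx : |x| < Rq q) : ‖impExp q (Complex.I * x)‖ = 1 := by
  have hnorm : ‖Complex.I * x‖ < Rq q := by simpa using hx
  have hconj : conj (Complex.I * x) = -(Complex.I * x) := by simp
  have hsq : (‖impExp q (Complex.I * x)‖ : ℂ) ^ 2 = 1 := by
    rw [← Complex.mul_conj', conj_impExp, hconj, impExp_mul_impExp_neg hq hq1 hnorm]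
  exact (pow_eq_one_iff_of_nonneg (norm_nonneg _) two_ne_zero).1 (by exact_mod_cast hsq)
end
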